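/- arXiv:1508.02946 — 2 statements merged into one kernel-verified Lean document; each statement's English description precedes it below -/
import Mathlib

section
/- Let F be a three-point subset of Euclidean space ℝⁿ. Then F has no focal points and dim_fH(F) = 1 if and only if the three points of F are collinear. -/
open Metric

namespace FinDim

variable {X : Type*} [MetricSpace X]

/-- `ν_F(a)`: the distance from `a` to a nearest other point of `F`. -/
noncomputable def nu (F : Finset X) (a : X) : ℝ :=
  sInf {r : ℝ | ∃ x ∈ F, x ≠ a ∧ r = dist a x}

/-- `δ(F)`: the separation of `F`, the minimum distance between distinct points. -/
noncomputable def sep (F : Finset X) : ℝ :=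
  sInf {r : ℝ | ∃ x ∈ F, ∃ y ∈ F, x ≠ y ∧ r = dist x y}

/-- A 2-covering of `F`: a family of subsets of `F` covering `F`,
each member having at least two elements. -/
def IsTwoCover (F : Finset X) (U : Finset (Finset X)) : Prop :=
  (∀ V ∈ U, V ⊆ F) ∧ (∀ V ∈ U, 2 ≤ V.card) ∧ ∀ a ∈ F, ∃ V ∈ U, a ∈ V

/-- `Δ(𝒰)`: maximum diameter of the members of the family `𝒰`. -/
noncomputable def coverDiam (U : Finset (Finset X)) : ℝ :=
  sSup {r : ℝ | ∃ V ∈ U, r = Metric.diam (V : Set X)}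

/-- `∇(F)`: the covering diameter of `F`. -/
noncomputable def nablaF (F : Finset X) : ℝ :=
  sInf {r : ℝ | ∃ U : Finset (Finset X), IsTwoCover F U ∧ r = coverDiam U}

/-- `a` is a focal point of `F`. -/
def IsFocal (F : Finset X) (a : X) : Prop :=
  a ∈ F ∧ ∀ x ∈ F, x ≠ a → dist a x = Metric.diam (F : Set X)

/-- `H^s_𝒰(F) = Σ_{U ∈ 𝒰} Δ(U)^s`. -/
noncomputable def Hcov (U : Finset (Finset X)) (s : ℝ) : ℝ :=
  ∑ V ∈ U, Metric.diam (V : Set X) ^ s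

/-- `H^s(F)`: minimum of `H^s_𝒰(F)` over 2-coverings `𝒰` with `Δ(𝒰) = ∇(F)`. -/
noncomputable def HH (F : Finset X) (s : ℝ) : ℝ :=
  sInf {h : ℝ | ∃ U : Finset (Finset X),
    IsTwoCover F U ∧ coverDiam U = nablaF F ∧ h = Hcov U s}

/-- The finite Hausdorff dimension: the unique `s₀ ∈ (0,∞)` with
`H^{s₀}(F) = Δ(F)^{s₀}` (when `F` has no focal points). -/
noncomputable def dimfH (F : Finset X) : ℝ :=
  sInf {s : ℝ | 0 < s ∧ HH F s = Metric.diam (F : Set X) ^ s}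

/-- `T_{∇(F)}(F)`: the minimal cardinality of a 2-covering `𝒰` with `Δ(𝒰) = ∇(F)`. -/
noncomputable def Tmin (F : Finset X) : ℕ :=
  sInf {n : ℕ | ∃ U : Finset (Finset X),
    IsTwoCover F U ∧ coverDiam U = nablaF F ∧ U.card = n}

/-- The finite box dimension `dim_fB(F) = ln T_{∇(F)}(F) / ln (Δ(F)/∇(F))`. -/
noncomputable def dimfB (F : Finset X) : ℝ :=
  Real.log (Tmin F) / Real.log (Metric.diam (F : Set X) / nablaF F)

/-- `ν_A(x)` for a subset `A` of a metric space. -/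
noncomputable def nuSet {Z : Type*} [MetricSpace Z] (A : Set Z) (x : Z) : ℝ :=
  sInf {r : ℝ | ∃ y ∈ A, y ≠ x ∧ r = dist x y}

/-- `∇(A) = sup {ν_A(x) : x ∈ A}` for a subset `A` of a metric space. -/
noncomputable def nablaSet {Z : Type*} [MetricSpace Z] (A : Set Z) : ℝ :=
  sSup {r : ℝ | ∃ x ∈ A, r = nuSet A x}

end FinDim

/-!
Sort the triangle `x y z` so that `dist x y ≤ dist x z ≤ dist y z`. The point `z` forces
`∇(F) ≥ dist x z`, and when `dist x z < dist y z` (exactly the case without focal points) no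
member of a 2-covering of diameter `∇(F)` contains both `y` and `z`, which forces the
covering `{{x, y}, {x, z}}`. Hence `∇(F) = dist x z` and
`H^s(F) = dist x y ^ s + dist x z ^ s`, so `dim_fH(F)` is the unique root of
`(dist x y) ^ s + (dist x z) ^ s = (dist y z) ^ s`. It equals `1` exactly when equality holds
in the triangle inequality through `x`, which in a strictly convex space means `x` lies
between `y` and `z`.
-/

theorem Real.sInf_eq_iff_mem_of_subsingleton {S : Set ℝ} (hS : S.Subsingleton) {a : ℝ}
    (ha : a ≠ 0) : sInf S = a ↔ a ∈ S := by
  rcases hS.eq_empty_or_singleton with rfl | ⟨b, rfl⟩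
  · simp [Real.sInf_empty, ha.symm]
  · simp [eq_comm]

theorem Real.subsingleton_setOf_rpow_add_rpow_eq_rpow {p q r : ℝ} (hp : 0 < p) (hq : 0 < q)
    (hpr : p < r) (hqr : q < r) : {s : ℝ | p ^ s + q ^ s = r ^ s}.Subsingleton := by
  have hr : 0 < r := hp.trans hpr
  have hanti : StrictAnti fun s : ℝ => (p / r) ^ s + (q / r) ^ s := fun s t hst =>
    add_lt_add
      (Real.rpow_lt_rpow_of_exponent_gt (div_pos hp hr) ((div_lt_one hr).2 hpr) hst)
      (Real.rpow_lt_rpow_of_exponent_gt (div_pos hq hr) ((div_lt_one hr).2 hqr) hst)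
  have hone : ∀ s : ℝ, p ^ s + q ^ s = r ^ s → (p / r) ^ s + (q / r) ^ s = 1 := by
    intro s hs
    rw [Real.div_rpow hp.le hr.le, Real.div_rpow hq.le hr.le, ← add_div, hs,
      div_self (Real.rpow_pos_of_pos hr s).ne']
  intro s hs t ht
  exact hanti.injective ((hone s hs).trans (hone t ht).symm)

theorem collinear_triple_iff_dist_add_dist_eq {E : Type*} [NormedAddCommGroup E]
    [NormedSpace ℝ E] [StrictConvexSpace ℝ E] {x y z : E}
    (h₁ : dist x y ≤ dist x z) (h₂ : dist x z ≤ dist y z) :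
    Collinear ℝ ({x, y, z} : Set E) ↔ dist x y + dist x z = dist y z := by
  have hxy := dist_nonneg (x := x) (y := y)
  have hyz := dist_nonneg (x := y) (y := z)
  constructor
  · intro h
    rcases h.wbtw_or_wbtw_or_wbtw with hw | hw | hw
    · linarith [hw.dist_add_dist]
    · have hd := hw.dist_add_dist
      rw [dist_comm z x, dist_comm y x] at hd
      linarith
    · have hd := hw.dist_add_dist
      rw [dist_comm z x, dist_comm z y] at hd
      linarith
  · intro h
    have hw : Wbtw ℝ y x z := dist_add_dist_eq_iff.1 (by rwa [dist_comm y x])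
    simpa only [Set.insert_comm] using hw.collinear

theorem exists_relabel_dist_le_dist_le {X : Type*} [MetricSpace X] [DecidableEq X]
    (a b c : X) : ∃ u v w : X, ({u, v, w} : Finset X) = {a, b, c} ∧
      dist u v ≤ dist u w ∧ dist u w ≤ dist v w := by
  have hlongest : ∀ a b c : X, dist a b ≤ dist b c → dist a c ≤ dist b c →
      ∃ u v w : X, ({u, v, w} : Finset X) = {a, b, c} ∧
        dist u v ≤ dist u w ∧ dist u w ≤ dist v w := by
    intro a b c hab hac
    rcases le_total (dist a b) (dist a c) with h | h
    · exact ⟨a, b, c, rfl, h, hac⟩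
    · exact ⟨a, c, b, by rw [Finset.pair_comm], h, by rwa [dist_comm c b]⟩
  have hbac : ({b, a, c} : Finset X) = {a, b, c} := Finset.insert_comm b a {c}
  have hcab : ({c, a, b} : Finset X) = {a, b, c} := by
    rw [Finset.insert_comm c a, Finset.pair_comm c b]
  rcases le_total (dist a b) (max (dist a c) (dist b c)) with h | h
  · rcases le_total (dist a c) (dist b c) with h' | h'
    · exact hlongest a b c (h.trans_eq (max_eq_right h')) h'
    · rw [← hbac]
      exact hlongest b a c (by rw [dist_comm]; exact h.trans_eq (max_eq_left h')) h'
  · obtain ⟨hac, hbc⟩ := max_le_iff.1 h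
    rw [← hcab]
    exact hlongest c a b (by rwa [dist_comm]) (by rwa [dist_comm])

namespace FinDim

theorem isTwoCover_pair_pair {α : Type*} [DecidableEq α] {x y z : α} (hxy : x ≠ y)
    (hxz : x ≠ z) :
    IsTwoCover {x, y, z} {{x, y}, {x, z}} := by
  refine ⟨?_, ?_, ?_⟩
  · simp only [Finset.mem_insert, Finset.mem_singleton]
    rintro V (rfl | rfl) <;> intro w <;> simp only [Finset.mem_insert, Finset.mem_singleton] <;>
      tauto
  · simp only [Finset.mem_insert, Finset.mem_singleton]
    rintro V (rfl | rfl)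
    · rw [Finset.card_pair hxy]
    · rw [Finset.card_pair hxz]
  · simp only [Finset.mem_insert, Finset.mem_singleton]
    rintro a (rfl | rfl | rfl)
    · exact ⟨{a, y}, by simp⟩
    · exact ⟨{x, a}, by simp⟩
    · exact ⟨{x, a}, by simp⟩

section Cover

variable {X : Type*} [MetricSpace X]

theorem ne_of_ne_of_dist_le_dist {x y z : X} (hxy : x ≠ y) (h : dist x y ≤ dist x z) : x ≠ z :=
  dist_pos.1 ((dist_pos.2 hxy).trans_le h)

theorem le_coverDiam {U : Finset (Finset X)} {V : Finset X} (hV : V ∈ U) :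
    diam (V : Set X) ≤ coverDiam U := by
  refine le_csSup ((U.finite_toSet.image fun W : Finset X => diam (W : Set X)).subset ?_).bddAbove
    ⟨V, hV, rfl⟩
  rintro r ⟨W, hW, rfl⟩
  exact ⟨W, hW, rfl⟩

theorem coverDiam_le {U : Finset (Finset X)} (hU : U.Nonempty) {c : ℝ}
    (h : ∀ V ∈ U, diam (V : Set X) ≤ c) : coverDiam U ≤ c := by
  obtain ⟨V, hV⟩ := hU
  refine csSup_le ⟨_, V, hV, rfl⟩ ?_
  rintro r ⟨W, hW, rfl⟩
  exact h W hW

theorem IsTwoCover.exists_ne_dist_le_coverDiam {F : Finset X} {U : Finset (Finset X)}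
    (hU : IsTwoCover F U) {a : X} (ha : a ∈ F) :
    ∃ b ∈ F, b ≠ a ∧ dist a b ≤ coverDiam U := by
  obtain ⟨V, hVU, haV⟩ := hU.2.2 a ha
  obtain ⟨b, hbV, hba⟩ := Finset.exists_mem_ne (hU.2.1 V hVU) a
  exact ⟨b, hU.1 V hVU hbV, hba,
    (dist_le_diam_of_mem V.finite_toSet.isBounded haV hbV).trans (le_coverDiam hVU)⟩

end Cover

section Triangle

variable {X : Type*} [MetricSpace X] [DecidableEq X] {x y z : X}

theorem coverDiam_pair_pair (h₁ : dist x y ≤ dist x z) :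
    coverDiam ({{x, y}, {x, z}} : Finset (Finset X)) = dist x z := by
  have hxz : diam (({x, z} : Finset X) : Set X) = dist x z := by
    rw [Finset.coe_pair, diam_pair]
  refine le_antisymm (coverDiam_le (Finset.insert_nonempty _ _) ?_)
    (hxz ▸ le_coverDiam (by simp))
  simp only [Finset.mem_insert, Finset.mem_singleton]
  rintro V (rfl | rfl)
  · rwa [Finset.coe_pair, diam_pair]
  · exact hxz.le

theorem diam_triple_of_le (h₁ : dist x y ≤ dist x z) (h₂ : dist x z ≤ dist y z) :
    diam (({x, y, z} : Finset X) : Set X) = dist y z := by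
  rw [Finset.coe_insert, Finset.coe_pair, diam_triple, max_eq_right h₁, max_eq_right h₂]

theorem nablaF_triple (hxy : x ≠ y) (h₁ : dist x y ≤ dist x z) (h₂ : dist x z ≤ dist y z) :
    nablaF {x, y, z} = dist x z := by
  have hxz := ne_of_ne_of_dist_le_dist hxy h₁
  refine IsLeast.csInf_eq ⟨⟨_, isTwoCover_pair_pair hxy hxz, (coverDiam_pair_pair h₁).symm⟩, ?_⟩
  rintro r ⟨U, hU, rfl⟩
  obtain ⟨b, hb, hbz, hzb⟩ := hU.exists_ne_dist_le_coverDiam (a := z) (by simp)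
  simp only [Finset.mem_insert, Finset.mem_singleton] at hb
  rcases hb with rfl | rfl | rfl
  · rwa [dist_comm] at hzb
  · exact h₂.trans (by rwa [dist_comm] at hzb)
  · exact absurd rfl hbz

theorem IsTwoCover.pair_mem_of_coverDiam_lt {U : Finset (Finset X)}
    (hU : IsTwoCover {x, y, z} U) (h : coverDiam U < dist y z) : {x, y} ∈ U := by
  obtain ⟨V, hVU, hyV⟩ := hU.2.2 y (by simp)
  have hzV : z ∉ V := fun hzV =>
    ((dist_le_diam_of_mem V.finite_toSet.isBounded hyV hzV).trans (le_coverDiam hVU)).not_gt h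
  have hsub : V ⊆ {x, y} := by
    intro w hw
    have hwF := hU.1 V hVU hw
    simp only [Finset.mem_insert, Finset.mem_singleton] at hwF ⊢
    rcases hwF with rfl | rfl | rfl
    exacts [Or.inl rfl, Or.inr rfl, absurd hw hzV]
  rwa [← Finset.eq_of_subset_of_card_le hsub (Finset.card_le_two.trans (hU.2.1 V hVU))]

theorem HH_triple (hxy : x ≠ y) (h₁ : dist x y ≤ dist x z) (h₂ : dist x z < dist y z)
    (s : ℝ) : HH {x, y, z} s = dist x y ^ s + dist x z ^ s := by
  have hxz := ne_of_ne_of_dist_le_dist hxy h₁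
  have hyz : y ≠ z := dist_pos.1 (dist_nonneg.trans_lt h₂)
  have hpairs : ({x, y} : Finset X) ≠ {x, z} := by
    intro h
    have hy : y ∈ ({x, z} : Finset X) := h ▸ by simp
    simp [hxy.symm, hyz] at hy
  have hHcov : Hcov {{x, y}, {x, z}} s = dist x y ^ s + dist x z ^ s := by
    rw [Hcov, Finset.sum_pair hpairs, Finset.coe_pair, Finset.coe_pair, diam_pair, diam_pair]
  rw [← hHcov]
  have hnabla := nablaF_triple hxy h₁ h₂.le
  refine IsLeast.csInf_eq ⟨⟨_, isTwoCover_pair_pair hxy hxz,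
    (coverDiam_pair_pair h₁).trans hnabla.symm, rfl⟩, ?_⟩
  rintro t ⟨U, hU, hUdiam, rfl⟩
  rw [hnabla] at hUdiam
  have hxyU : {x, y} ∈ U := hU.pair_mem_of_coverDiam_lt (hUdiam ▸ h₂)
  have hxzU : {x, z} ∈ U := by
    rw [Finset.pair_comm y z] at hU
    exact hU.pair_mem_of_coverDiam_lt (by rw [hUdiam, dist_comm z y]; exact h₂)
  exact Finset.sum_le_sum_of_subset_of_nonneg (Finset.insert_subset hxyU (by simpa using hxzU))
    fun V _ _ => Real.rpow_nonneg diam_nonneg s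

theorem forall_not_isFocal_triple_iff (hxy : x ≠ y) (h₁ : dist x y ≤ dist x z)
    (h₂ : dist x z ≤ dist y z) :
    (∀ a, ¬ IsFocal {x, y, z} a) ↔ dist x z < dist y z := by
  have hdiam := diam_triple_of_le h₁ h₂
  constructor
  · intro h
    refine h₂.lt_of_ne fun hqr => h z ⟨by simp, ?_⟩
    simp only [Finset.mem_insert, Finset.mem_singleton, hdiam]
    rintro w (rfl | rfl | rfl) hw
    · rw [dist_comm, hqr]
    · exact dist_comm _ _
    · exact absurd rfl hw
  · rintro hqr a ⟨ha, hfocal⟩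
    simp only [Finset.mem_insert, Finset.mem_singleton] at ha
    rcases ha with rfl | rfl | rfl
    · have := hfocal y (by simp) hxy.symm
      linarith
    · have := hfocal x (by simp) hxy
      rw [dist_comm] at this
      linarith
    · have := hfocal x (by simp) (ne_of_ne_of_dist_le_dist hxy h₁)
      rw [dist_comm] at this
      linarith

theorem dimfH_triple_eq_one_iff (hxy : x ≠ y) (h₁ : dist x y ≤ dist x z)
    (h₂ : dist x z < dist y z) :
    dimfH {x, y, z} = 1 ↔ dist x y + dist x z = dist y z := by
  have hp := dist_pos.2 hxy
  have hset : {s : ℝ | 0 < s ∧ HH {x, y, z} s = diam (({x, y, z} : Finset X) : Set X) ^ s} =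
      {s : ℝ | 0 < s ∧ dist x y ^ s + dist x z ^ s = dist y z ^ s} := by
    simp only [HH_triple hxy h₁ h₂, diam_triple_of_le h₁ h₂.le]
  have hsub := Real.subsingleton_setOf_rpow_add_rpow_eq_rpow hp (hp.trans_le h₁)
    (h₁.trans_lt h₂) h₂
  rw [dimfH, hset, Real.sInf_eq_iff_mem_of_subsingleton (hsub.anti fun s hs => hs.2) one_ne_zero]
  simp only [Set.mem_ofPred_eq, Real.rpow_one, zero_lt_one, true_and]

end Triangle

theorem triple_forall_not_isFocal_and_dimfH_eq_one_iff_collinear {E : Type*}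
    [NormedAddCommGroup E] [NormedSpace ℝ E] [StrictConvexSpace ℝ E] [DecidableEq E] {x y z : E}
    (hxy : x ≠ y) (h₁ : dist x y ≤ dist x z) (h₂ : dist x z ≤ dist y z) :
    ((∀ a, ¬ IsFocal {x, y, z} a) ∧ dimfH {x, y, z} = 1) ↔
      Collinear ℝ (({x, y, z} : Finset E) : Set E) := by
  rw [Finset.coe_insert, Finset.coe_pair, collinear_triple_iff_dist_add_dist_eq h₁ h₂,
    forall_not_isFocal_triple_iff hxy h₁ h₂]
  constructor
  · rintro ⟨h₂, hdim⟩
    exact (dimfH_triple_eq_one_iff hxy h₁ h₂).1 hdim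
  · intro hsum
    have h₂ : dist x z < dist y z := by linarith [dist_pos.2 hxy]
    exact ⟨h₂, (dimfH_triple_eq_one_iff hxy h₁ h₂).2 hsum⟩

end FinDim

open FinDim in
/-- A three-point subset of `ℝⁿ` has no focal points and `dim_fH(F) = 1`
iff its points are collinear. -/
theorem stmt13 {n : ℕ} (F : Finset (EuclideanSpace ℝ (Fin n))) (hF : F.card = 3) :
    ((∀ a, ¬ IsFocal F a) ∧ dimfH F = 1) ↔
      Collinear ℝ (F : Set (EuclideanSpace ℝ (Fin n))) := by
  classical
  obtain ⟨a, b, c, -, -, -, rfl⟩ := Finset.card_eq_three.1 hF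
  obtain ⟨u, v, w, huvw, h₁, h₂⟩ := exists_relabel_dist_le_dist_le a b c
  rw [← huvw] at hF ⊢
  have huv : u ≠ v := by
    rintro rfl
    simp only [Finset.insert_eq_of_mem (Finset.mem_insert_self u {w})] at hF
    have := Finset.card_le_two (a := u) (b := w)
    omega
  exact triple_forall_not_isFocal_and_dimfH_eq_one_iff_collinear huv h₁ h₂
end

section
/- Let X ⊆ ℝⁿ be compact with ∇(X) = 0 < Δ(X), let c ∈ (0,1), and for each k ∈ ℕ set ε_k := c^k, N_k := |𝒬(ε_k,X)| (the number of cubes of the ε_k-tiling meeting X), and F_k := ε_k·ℤⁿ ∩ ⋃{Q : Q ∈ 𝒬(ε_k,X)}. Suppose the limit L := lim_{k→∞} ln N_k / (−ln ε_k) exists (L is the box-counting dimension of X). Then for all sufficiently large k the set F_k has no focal points, and lim_{k→∞} dim_fB(F_k) = L. -/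
/-!
The points of `F_k` lie on the grid `c^k ℤⁿ`, so distinct points are at least `c^k` apart, while
every point has a neighbour at distance exactly `c^k` (the adjacent corner of its cube). Hence
`∇(F_k) = c^k`, pairs of neighbours form a 2-covering with at most `|F_k|` members, and a set of
grid points of diameter at most `c^k` has at most `3ⁿ` points; so `T_{∇}(F_k)` and `N_k` agree up
to a factor `3ⁿ`. Since `Δ(F_k) → Δ(X) > 0`, `ln (Δ(F_k)/∇(F_k)) = -ln c^k + O(1)`, and
`dim_fB(F_k)` has the same limit as `ln N_k / (-ln c^k)`. Once `c^k < Δ(F_k)`, the neighbour at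
distance `c^k` rules out focal points.
-/
open Metric

namespace FinDim

/-- The closed axis-parallel cube of the `ε`-tiling of `ℝⁿ` indexed by `m ∈ ℤⁿ`. -/
def cube (n : ℕ) (ε : ℝ) (m : Fin n → ℤ) : Set (EuclideanSpace ℝ (Fin n)) :=
  {x | ∀ i, ε * (m i : ℝ) ≤ x i ∧ x i ≤ ε * ((m i : ℝ) + 1)}

/-- The set of corners (lattice points) of the cube indexed by `m`. -/
def corners (n : ℕ) (ε : ℝ) (m : Fin n → ℤ) : Set (EuclideanSpace ℝ (Fin n)) :=
  {p | ∀ i, p i = ε * (m i : ℝ) ∨ p i = ε * ((m i : ℝ) + 1)}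

/-- `F_ε = ε·ℤⁿ ∩ ⋃ 𝒬(ε,X)`: all lattice corners of cubes of the `ε`-tiling
that meet `X`. -/
def latticeApprox (n : ℕ) (X : Set (EuclideanSpace ℝ (Fin n))) (ε : ℝ) :
    Set (EuclideanSpace ℝ (Fin n)) :=
  {p | ∃ m : Fin n → ℤ, (cube n ε m ∩ X).Nonempty ∧ p ∈ corners n ε m}

end FinDim

open Filter Topology

theorem Metric.isBounded_of_diam_pos {Y : Type*} [PseudoMetricSpace Y] {s : Set Y}
    (h : 0 < diam s) : Bornology.IsBounded s :=
  not_not.mp fun hs => h.ne' (diam_eq_zero_of_unbounded hs)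

theorem Metric.nontrivial_of_diam_pos {Y : Type*} [PseudoMetricSpace Y] {s : Set Y}
    (h : 0 < diam s) : s.Nontrivial :=
  Set.not_subsingleton_iff.mp fun hs => h.ne' (diam_subsingleton hs)

theorem Real.abs_log_sub_log_le {x y K : ℝ} (hx : 0 < x) (hy : 0 < y) (hxy : x ≤ K * y)
    (hyx : y ≤ K * x) : |Real.log x - Real.log y| ≤ Real.log K := by
  have hK : 0 < K := pos_of_mul_pos_left (hx.trans_le hxy) hy.le
  rw [abs_sub_le_iff, sub_le_iff_le_add, sub_le_iff_le_add, ← Real.log_mul hK.ne' hy.ne',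
    ← Real.log_mul hK.ne' hx.ne']
  exact ⟨Real.log_le_log hx hxy, Real.log_le_log hy hyx⟩

theorem tendsto_div_add_of_abs_sub_le {α : Type*} {l : Filter α} {a b d g : α → ℝ} {L δ C : ℝ}
    (ha : Tendsto (fun k => a k / g k) l (𝓝 L)) (hab : ∀ k, |b k - a k| ≤ C)
    (hg : Tendsto g l atTop) (hd : Tendsto d l (𝓝 δ)) :
    Tendsto (fun k => b k / (d k + g k)) l (𝓝 L) := by
  have hgpos := hg.eventually_gt_atTop 0
  have hba : Tendsto (fun k => (b k - a k) / g k) l (𝓝 0) := by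
    refine squeeze_zero_norm' (a := fun k => C / g k) ?_ (tendsto_const_nhds.div_atTop hg)
    filter_upwards [hgpos] with k hk
    rw [Real.norm_eq_abs, abs_div, abs_of_pos hk]
    exact div_le_div_of_nonneg_right (hab k) hk.le
  have hb : Tendsto (fun k => b k / g k) l (𝓝 L) := by
    simpa [← add_div] using ha.add hba
  have hdg : Tendsto (fun k => (d k + g k) / g k) l (𝓝 1) := by
    have h := (hd.div_atTop hg).add_const 1
    rw [zero_add] at h
    refine h.congr' ?_
    filter_upwards [hgpos] with k hk
    rw [add_div, div_self hk.ne']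
  have hquot := hb.div hdg one_ne_zero
  rw [div_one] at hquot
  refine hquot.congr' ?_
  filter_upwards [hgpos] with k hk
  exact div_div_div_cancel_right₀ hk.ne' _ _

namespace FinDim

section

variable {Y : Type*} [MetricSpace Y] {F : Finset Y} {ε : ℝ}

theorem diam_le_coverDiam {U : Finset (Finset Y)} {V : Finset Y} (hV : V ∈ U) :
    diam (V : Set Y) ≤ coverDiam U :=
  le_csSup (BddAbove.mono (fun _ ⟨_, hW, hr⟩ => hr ▸ Finset.mem_image_of_mem _ hW)
    (U.image fun W : Finset Y => diam (W : Set Y)).bddAbove) ⟨V, hV, rfl⟩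

theorem coverDiam_eq_of_forall_diam_eq {U : Finset (Finset Y)} {r : ℝ} (hU : U.Nonempty)
    (h : ∀ V ∈ U, diam (V : Set Y) = r) : coverDiam U = r := by
  have : {s : ℝ | ∃ V ∈ U, s = diam (V : Set Y)} = {r} := by
    ext s
    constructor
    · rintro ⟨V, hV, rfl⟩
      exact h V hV
    · rintro rfl
      obtain ⟨V, hV⟩ := hU
      exact ⟨V, hV, (h V hV).symm⟩
  rw [coverDiam, this, csSup_singleton]

theorem le_coverDiam_of_le_dist (hsep : ∀ p ∈ F, ∀ q ∈ F, p ≠ q → ε ≤ dist p q) (hne : F.Nonempty)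
    {U : Finset (Finset Y)} (hU : IsTwoCover F U) : ε ≤ coverDiam U := by
  obtain ⟨p, hp⟩ := hne
  obtain ⟨V, hVU, -⟩ := hU.2.2 p hp
  obtain ⟨a, ha, b, hb, hab⟩ := Finset.one_lt_card.mp (hU.2.1 V hVU)
  calc ε ≤ dist a b := hsep a (hU.1 V hVU ha) b (hU.1 V hVU hb) hab
    _ ≤ diam (V : Set Y) := dist_le_diam_of_mem V.finite_toSet.isBounded ha hb
    _ ≤ coverDiam U := diam_le_coverDiam hVU

theorem exists_twoCover_of_forall_exists_dist_eq
    (hnb : ∀ p ∈ F, ∃ q ∈ F, q ≠ p ∧ dist p q = ε) (hne : F.Nonempty) :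
    ∃ U : Finset (Finset Y), IsTwoCover F U ∧ coverDiam U = ε ∧ U.card ≤ F.card := by
  classical
  choose q hqF hqp hpq using hnb
  set U := F.attach.image fun p => ({p.1, q p.1 p.2} : Finset Y)
  have hmemU : ∀ V ∈ U, ∃ p, ∃ hp : p ∈ F, V = {p, q p hp} := by
    simp only [U, Finset.mem_image, Finset.mem_attach, true_and]
    rintro V ⟨⟨p, hp⟩, rfl⟩
    exact ⟨p, hp, rfl⟩
  have hcover : IsTwoCover F U := by
    refine ⟨fun V hV => ?_, fun V hV => ?_, fun p hp => ⟨{p, q p hp}, ?_, by simp⟩⟩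
    · obtain ⟨p, hp, rfl⟩ := hmemU V hV
      exact Finset.insert_subset hp (Finset.singleton_subset_iff.mpr (hqF p hp))
    · obtain ⟨p, hp, rfl⟩ := hmemU V hV
      rw [Finset.card_pair (hqp p hp).symm]
    · exact Finset.mem_image.mpr ⟨⟨p, hp⟩, Finset.mem_attach _ _, rfl⟩
  refine ⟨U, hcover, coverDiam_eq_of_forall_diam_eq (hne.attach.image _) fun V hV => ?_,
    Finset.card_image_le.trans F.card_attach.le⟩
  obtain ⟨p, hp, rfl⟩ := hmemU V hV
  rw [Finset.coe_pair, diam_pair, hpq p hp]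

theorem nablaF_eq (hsep : ∀ p ∈ F, ∀ q ∈ F, p ≠ q → ε ≤ dist p q)
    (hnb : ∀ p ∈ F, ∃ q ∈ F, q ≠ p ∧ dist p q = ε) (hne : F.Nonempty) : nablaF F = ε := by
  obtain ⟨U, hU, hUε, -⟩ := exists_twoCover_of_forall_exists_dist_eq hnb hne
  refine le_antisymm (csInf_le ⟨ε, ?_⟩ ⟨U, hU, hUε.symm⟩) (le_csInf ⟨ε, U, hU, hUε.symm⟩ ?_) <;>
  · rintro _ ⟨V, hV, rfl⟩
    exact le_coverDiam_of_le_dist hsep hne hV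

theorem exists_twoCover_nablaF (hsep : ∀ p ∈ F, ∀ q ∈ F, p ≠ q → ε ≤ dist p q)
    (hnb : ∀ p ∈ F, ∃ q ∈ F, q ≠ p ∧ dist p q = ε) (hne : F.Nonempty) :
    ∃ U : Finset (Finset Y), IsTwoCover F U ∧ coverDiam U = nablaF F ∧ U.card ≤ F.card := by
  rw [nablaF_eq hsep hnb hne]
  exact exists_twoCover_of_forall_exists_dist_eq hnb hne

theorem Tmin_le_card (hsep : ∀ p ∈ F, ∀ q ∈ F, p ≠ q → ε ≤ dist p q)
    (hnb : ∀ p ∈ F, ∃ q ∈ F, q ≠ p ∧ dist p q = ε) (hne : F.Nonempty) : Tmin F ≤ F.card := by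
  obtain ⟨U, hU, hUε, hcard⟩ := exists_twoCover_nablaF hsep hnb hne
  exact (Nat.sInf_le ⟨U, hU, hUε, rfl⟩ : Tmin F ≤ U.card).trans hcard

theorem card_le_mul_Tmin {B : ℕ} (hsep : ∀ p ∈ F, ∀ q ∈ F, p ≠ q → ε ≤ dist p q)
    (hnb : ∀ p ∈ F, ∃ q ∈ F, q ≠ p ∧ dist p q = ε) (hne : F.Nonempty)
    (hsmall : ∀ V ⊆ F, diam (V : Set Y) ≤ ε → V.card ≤ B) : F.card ≤ B * Tmin F := by
  classical
  obtain ⟨U₀, hU₀, hU₀ε, -⟩ := exists_twoCover_nablaF hsep hnb hne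
  obtain ⟨U, hU, hUε, hcard⟩ : Tmin F ∈ {t : ℕ | ∃ U : Finset (Finset Y),
      IsTwoCover F U ∧ coverDiam U = nablaF F ∧ U.card = t} :=
    Nat.sInf_mem ⟨_, U₀, hU₀, hU₀ε, rfl⟩
  have hsub : F ⊆ U.biUnion id := fun a ha =>
    let ⟨V, hV, haV⟩ := hU.2.2 a ha
    Finset.mem_biUnion.mpr ⟨V, hV, haV⟩
  calc F.card ≤ (U.biUnion id).card := Finset.card_le_card hsub
    _ ≤ ∑ V ∈ U, V.card := Finset.card_biUnion_le
    _ ≤ U.card * B := Finset.sum_le_card_nsmul _ _ _ fun V hV =>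
        hsmall V (hU.1 V hV) ((diam_le_coverDiam hV).trans (by rw [hUε, nablaF_eq hsep hnb hne]))
    _ = B * Tmin F := by rw [hcard, mul_comm]

theorem not_isFocal_of_forall_exists_dist_eq
    (hnb : ∀ p ∈ F, ∃ q ∈ F, q ≠ p ∧ dist p q = ε) (hlt : ε < diam (F : Set Y)) (a : Y) :
    ¬ IsFocal F a := fun ⟨ha, hfoc⟩ =>
  let ⟨q, hq, hqa, hd⟩ := hnb a ha
  hlt.ne (hd.symm.trans (hfoc q hq hqa))

end

variable {n : ℕ} {ε : ℝ}

def latticePoint (ε : ℝ) (z : Fin n → ℤ) : EuclideanSpace ℝ (Fin n) :=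
  WithLp.toLp 2 fun i => ε * z i

@[simp]
theorem latticePoint_apply (ε : ℝ) (z : Fin n → ℤ) (i : Fin n) :
    latticePoint ε z i = ε * z i :=
  rfl

theorem latticePoint_injective (hε : ε ≠ 0) : Function.Injective (latticePoint (n := n) ε) :=
  fun z w h => funext fun i => by simpa [hε] using congrArg (· i) h

theorem abs_sub_apply_le_dist (x y : EuclideanSpace ℝ (Fin n)) (i : Fin n) :
    |x i - y i| ≤ dist x y :=
  (Real.dist_eq _ _).symm.trans_le (PiLp.dist_apply_le x y i)

theorem dist_le_sqrt_mul_of_abs_sub_apply_le {x y : EuclideanSpace ℝ (Fin n)} {r : ℝ}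
    (hr : 0 ≤ r) (h : ∀ i, |x i - y i| ≤ r) : dist x y ≤ √n * r := by
  rw [EuclideanSpace.dist_eq, ← Real.sqrt_sq hr, ← Real.sqrt_mul (Nat.cast_nonneg n)]
  refine Real.sqrt_le_sqrt ?_
  calc ∑ i, dist (x i) (y i) ^ 2 ≤ ∑ _i : Fin n, r ^ 2 := Finset.sum_le_sum fun i _ =>
        pow_le_pow_left₀ dist_nonneg ((Real.dist_eq _ _).trans_le (h i)) 2
    _ = n * r ^ 2 := by simp

theorem le_dist_latticePoint (hε : 0 < ε) {z w : Fin n → ℤ} (h : z ≠ w) :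
    ε ≤ dist (latticePoint ε z) (latticePoint ε w) := by
  obtain ⟨i, hi⟩ := Function.ne_iff.mp h
  have h1 : (1 : ℝ) ≤ |(z i : ℝ) - w i| := by exact_mod_cast Int.one_le_abs (sub_ne_zero.mpr hi)
  calc ε ≤ ε * |(z i : ℝ) - w i| := le_mul_of_one_le_right hε.le h1
    _ = |latticePoint ε z i - latticePoint ε w i| := by simp [← mul_sub, abs_mul, abs_of_pos hε]
    _ ≤ _ := abs_sub_apply_le_dist _ _ i

theorem dist_latticePoint_update (ε : ℝ) (z : Fin n → ℤ) (i : Fin n) (a : ℤ) :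
    dist (latticePoint ε z) (latticePoint ε (Function.update z i a)) = |ε| * |(z i : ℝ) - a| := by
  rw [EuclideanSpace.dist_eq, Finset.sum_eq_single i, Real.sqrt_sq dist_nonneg, Real.dist_eq]
  · simp [← mul_sub, abs_mul]
  · intro j _ hj
    simp [Function.update_of_ne hj]
  · simp

theorem corners_eq_image (ε : ℝ) (m : Fin n → ℤ) :
    corners n ε m =
      latticePoint ε '' ↑(Fintype.piFinset fun i => ({m i, m i + 1} : Finset ℤ)) := by
  ext p
  constructor
  · intro hp
    refine ⟨fun i => if p i = ε * m i then m i else m i + 1, ?_, ?_⟩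
    · simp only [Finset.mem_coe, Fintype.mem_piFinset]
      intro i
      split_ifs <;> simp
    · ext i
      by_cases h : p i = ε * m i
      · simp [h]
      · simp [(hp i).resolve_left h]
  · rintro ⟨z, hz, rfl⟩ i
    simp only [Finset.mem_coe, Fintype.mem_piFinset, Finset.mem_insert,
      Finset.mem_singleton] at hz
    rcases hz i with h | h <;> simp [h]

theorem latticePoint_mem_corners (ε : ℝ) (m : Fin n → ℤ) : latticePoint ε m ∈ corners n ε m :=
  fun _ => Or.inl rfl

theorem corners_subset_cube (hε : 0 ≤ ε) (m : Fin n → ℤ) : corners n ε m ⊆ cube n ε m := by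
  intro p hp i
  rcases hp i with h | h <;> rw [h] <;> constructor <;> nlinarith

theorem mem_cube_floor (hε : 0 < ε) (x : EuclideanSpace ℝ (Fin n)) :
    x ∈ cube n ε fun i => ⌊x i / ε⌋ :=
  fun _ => ⟨(le_div_iff₀' hε).mp (Int.floor_le _), (div_le_iff₀' hε).mp (Int.lt_floor_add_one _).le⟩

theorem dist_le_of_mem_cube (hε : 0 ≤ ε) {m : Fin n → ℤ} {x y : EuclideanSpace ℝ (Fin n)}
    (hx : x ∈ cube n ε m) (hy : y ∈ cube n ε m) : dist x y ≤ √n * ε :=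
  dist_le_sqrt_mul_of_abs_sub_apply_le hε fun i =>
    abs_sub_le_iff.mpr ⟨by linarith [hx i, hy i], by linarith [hx i, hy i]⟩

theorem pos_of_nontrivial {X : Set (EuclideanSpace ℝ (Fin n))} (hX : X.Nontrivial) : 0 < n :=
  Nat.pos_of_ne_zero fun h => by
    subst h
    exact hX.not_subsingleton Set.subsingleton_of_subsingleton

variable {X : Set (EuclideanSpace ℝ (Fin n))}

theorem latticeApprox_subset_range : latticeApprox n X ε ⊆ Set.range (latticePoint ε) := by
  rintro p ⟨m, -, hp⟩
  rw [corners_eq_image] at hp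
  obtain ⟨z, -, rfl⟩ := hp
  exact ⟨z, rfl⟩

theorem latticePoint_mem_latticeApprox {m : Fin n → ℤ} (hm : (cube n ε m ∩ X).Nonempty) :
    latticePoint ε m ∈ latticeApprox n X ε :=
  ⟨m, hm, latticePoint_mem_corners ε m⟩

theorem latticeApprox_nonempty (hε : 0 < ε) (hX : X.Nonempty) : (latticeApprox n X ε).Nonempty :=
  let ⟨x, hx⟩ := hX
  ⟨_, latticePoint_mem_latticeApprox ⟨x, mem_cube_floor hε x, hx⟩⟩

theorem subset_cthickening_latticeApprox (hε : 0 < ε) :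
    X ⊆ Metric.cthickening (√n * ε) (latticeApprox n X ε) := fun x hx =>
  have hcube := mem_cube_floor hε x
  mem_cthickening_of_dist_le _ _ _ _ (latticePoint_mem_latticeApprox ⟨x, hcube, hx⟩)
    (dist_le_of_mem_cube hε.le hcube (corners_subset_cube hε.le _ (latticePoint_mem_corners ε _)))

theorem latticeApprox_subset_cthickening (hε : 0 ≤ ε) :
    latticeApprox n X ε ⊆ Metric.cthickening (√n * ε) X := by
  rintro p ⟨m, ⟨x, hxc, hxX⟩, hpc⟩
  exact mem_cthickening_of_dist_le _ _ _ _ hxX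
    (dist_le_of_mem_cube hε (corners_subset_cube hε m hpc) hxc)

theorem abs_diam_latticeApprox_sub_le (hε : 0 < ε) (hX : Bornology.IsBounded X)
    (hfin : (latticeApprox n X ε).Finite) :
    |diam (latticeApprox n X ε) - diam X| ≤ 2 * (√n * ε) := by
  have hr : 0 ≤ √n * ε := by positivity
  rw [abs_sub_le_iff]
  constructor
  · linarith [(diam_mono (latticeApprox_subset_cthickening hε.le) hX.cthickening).trans
      (diam_cthickening_le X hr)]
  · linarith [(diam_mono (subset_cthickening_latticeApprox hε) hfin.isBounded.cthickening).trans
      (diam_cthickening_le _ hr)]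

theorem exists_dist_eq_of_mem_latticeApprox (hn : 0 < n) (hε : 0 < ε)
    {p : EuclideanSpace ℝ (Fin n)} (hp : p ∈ latticeApprox n X ε) :
    ∃ q ∈ latticeApprox n X ε, q ≠ p ∧ dist p q = ε := by
  obtain ⟨m, hm, hpc⟩ := hp
  rw [corners_eq_image] at hpc
  obtain ⟨z, hz, rfl⟩ := hpc
  simp only [Finset.mem_coe, Fintype.mem_piFinset, Finset.mem_insert,
    Finset.mem_singleton] at hz
  -- reflect the first coordinate of the corner inside its cube
  set i₀ : Fin n := ⟨0, hn⟩
  set w := Function.update z i₀ (2 * m i₀ + 1 - z i₀)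
  have hw : w ∈ Fintype.piFinset fun i => ({m i, m i + 1} : Finset ℤ) := by
    simp only [Fintype.mem_piFinset, Finset.mem_insert, Finset.mem_singleton]
    intro i
    by_cases hi : i = i₀
    · have := hz i₀
      simp only [w, hi, Function.update_self]
      omega
    · simp only [w, Function.update_of_ne hi]
      exact hz i
  have hdist : dist (latticePoint ε z) (latticePoint ε w) = ε := by
    have h1 : |z i₀ - (2 * m i₀ + 1 - z i₀)| = 1 :=
      (abs_eq zero_le_one).mpr (by have := hz i₀; omega)
    rw [dist_latticePoint_update, abs_of_pos hε, ← Int.cast_sub, ← Int.cast_abs, h1,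
      Int.cast_one, mul_one]
  refine ⟨latticePoint ε w, ⟨m, hm, corners_eq_image ε m ▸ ⟨w, hw, rfl⟩⟩, fun h => ?_, hdist⟩
  rw [h, dist_self] at hdist
  exact hε.ne hdist

theorem card_le_three_pow (hε : 0 < ε) {V : Finset (EuclideanSpace ℝ (Fin n))}
    (hV : (V : Set (EuclideanSpace ℝ (Fin n))) ⊆ Set.range (latticePoint ε))
    (hd : diam (V : Set (EuclideanSpace ℝ (Fin n))) ≤ ε) : V.card ≤ 3 ^ n := by
  classical
  rcases V.eq_empty_or_nonempty with rfl | ⟨p₀, hp₀⟩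
  · simp
  obtain ⟨z₀, rfl⟩ := hV hp₀
  have hsub : V ⊆ (Fintype.piFinset fun i => Finset.Icc (z₀ i - 1) (z₀ i + 1)).image
      (latticePoint ε) := by
    intro p hp
    obtain ⟨z, rfl⟩ := hV hp
    refine Finset.mem_image.mpr ⟨z, Fintype.mem_piFinset.mpr fun i => ?_, rfl⟩
    have h : ε * |(z i : ℝ) - z₀ i| ≤ ε * 1 := calc
      ε * |(z i : ℝ) - z₀ i| = |latticePoint ε z i - latticePoint ε z₀ i| := by
        simp [← mul_sub, abs_mul, abs_of_pos hε]
      _ ≤ dist (latticePoint ε z) (latticePoint ε z₀) := abs_sub_apply_le_dist _ _ i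
      _ ≤ ε * 1 := (dist_le_diam_of_mem V.finite_toSet.isBounded hp hp₀).trans (by simpa using hd)
    have : |z i - z₀ i| ≤ 1 := by exact_mod_cast le_of_mul_le_mul_left h hε
    rw [Finset.mem_Icc]
    constructor <;> linarith [abs_le.mp this]
  calc V.card ≤ (Fintype.piFinset fun i => Finset.Icc (z₀ i - 1) (z₀ i + 1)).card :=
        (Finset.card_le_card hsub).trans Finset.card_image_le
    _ = 3 ^ n := by simp [Fintype.card_piFinset, show ∀ a : ℤ, a + 1 + 1 - (a - 1) = 3 by omega]

theorem ncard_cubes_le_ncard_latticeApprox (hε : ε ≠ 0) (hfin : (latticeApprox n X ε).Finite) :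
    {m | (cube n ε m ∩ X).Nonempty}.ncard ≤ (latticeApprox n X ε).ncard :=
  Set.ncard_le_ncard_of_injOn _ (fun _ => latticePoint_mem_latticeApprox)
    (latticePoint_injective hε).injOn hfin

theorem ncard_latticeApprox_le (hε : ε ≠ 0) (hfin : (latticeApprox n X ε).Finite) :
    (latticeApprox n X ε).ncard ≤ 2 ^ n * {m | (cube n ε m ∩ X).Nonempty}.ncard := by
  set S := {m | (cube n ε m ∩ X).Nonempty}
  have hS : S.Finite := (hfin.preimage (latticePoint_injective hε).injOn).subset
    fun _ => latticePoint_mem_latticeApprox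
  have hunion : latticeApprox n X ε = ⋃ m ∈ hS.toFinset, corners n ε m := by
    ext p
    simp [latticeApprox, S]
  rw [hunion, Set.ncard_eq_toFinset_card _ hS, mul_comm]
  refine (Finset.set_ncard_biUnion_le _ _).trans (Finset.sum_le_card_nsmul _ _ _ fun m _ => ?_)
  classical
  rw [corners_eq_image, ← Finset.coe_image, Set.ncard_coe_finset]
  refine Finset.card_image_le.trans ?_
  simp [Fintype.card_piFinset, Finset.card_pair (lt_add_one _).ne]

theorem tendsto_diam_latticeApprox {ι : Type*} {l : Filter ι} {ε : ι → ℝ} (hε : ∀ k, 0 < ε k)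
    (hε₀ : Tendsto ε l (𝓝 0)) (hX : Bornology.IsBounded X)
    (hfin : ∀ k, (latticeApprox n X (ε k)).Finite) :
    Tendsto (fun k => diam (latticeApprox n X (ε k))) l (𝓝 (diam X)) := by
  have h₀ : Tendsto (fun k => 2 * (√n * ε k)) l (𝓝 0) := by
    simpa using (hε₀.const_mul √n).const_mul 2
  exact tendsto_iff_norm_sub_tendsto_zero.mpr <| squeeze_zero (fun _ => norm_nonneg _)
    (fun k => abs_diam_latticeApprox_sub_le (hε k) hX (hfin k)) h₀

variable {F : Finset (EuclideanSpace ℝ (Fin n))}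

theorem le_dist_of_coe_eq_latticeApprox (hε : 0 < ε) (hF : (F : Set _) = latticeApprox n X ε) :
    ∀ p ∈ F, ∀ q ∈ F, p ≠ q → ε ≤ dist p q := by
  intro p hp q hq hpq
  obtain ⟨z, rfl⟩ := latticeApprox_subset_range ((Set.ext_iff.mp hF p).mp hp)
  obtain ⟨w, rfl⟩ := latticeApprox_subset_range ((Set.ext_iff.mp hF q).mp hq)
  exact le_dist_latticePoint hε (ne_of_apply_ne _ hpq)

theorem exists_dist_eq_of_coe_eq_latticeApprox (hn : 0 < n) (hε : 0 < ε)
    (hF : (F : Set _) = latticeApprox n X ε) : ∀ p ∈ F, ∃ q ∈ F, q ≠ p ∧ dist p q = ε := by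
  intro p hp
  simpa only [← hF, Finset.mem_coe] using
    exists_dist_eq_of_mem_latticeApprox hn hε ((Set.ext_iff.mp hF p).mp hp)

theorem abs_log_Tmin_sub_log_ncard_le (hn : 0 < n) (hε : 0 < ε)
    (hF : (F : Set _) = latticeApprox n X ε) (hne : F.Nonempty) :
    |Real.log (Tmin F) - Real.log {m | (cube n ε m ∩ X).Nonempty}.ncard| ≤ Real.log (3 ^ n) := by
  have hsep := le_dist_of_coe_eq_latticeApprox hε hF
  have hnb := exists_dist_eq_of_coe_eq_latticeApprox hn hε hF
  have hfin : (latticeApprox n X ε).Finite := hF ▸ F.finite_toSet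
  have hcard : (latticeApprox n X ε).ncard = F.card := by rw [← hF, Set.ncard_coe_finset]
  have hT₁ := Tmin_le_card hsep hnb hne
  have hT₂ := card_le_mul_Tmin hsep hnb hne fun V hV hd =>
    card_le_three_pow hε ((Finset.coe_subset.mpr hV).trans (hF ▸ latticeApprox_subset_range)) hd
  have hS₁ := ncard_cubes_le_ncard_latticeApprox hε.ne' hfin
  have hS₂ := ncard_latticeApprox_le hε.ne' hfin
  rw [hcard] at hS₁ hS₂
  have h23 : 2 ^ n ≤ 3 ^ n := Nat.pow_le_pow_left (by norm_num) n
  have hpos := hne.card_pos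
  have hT : 0 < Tmin F := Nat.pos_of_ne_zero fun h => by rw [h, mul_zero] at hT₂; omega
  have hS : 0 < {m | (cube n ε m ∩ X).Nonempty}.ncard :=
    Nat.pos_of_ne_zero fun h => by rw [h, mul_zero] at hS₂; omega
  refine Real.abs_log_sub_log_le (by exact_mod_cast hT) (by exact_mod_cast hS)
    ?_ (by exact_mod_cast hS₁.trans hT₂)
  exact_mod_cast hT₁.trans (hS₂.trans (Nat.mul_le_mul_right _ h23))

end FinDim

open FinDim in
theorem stmt18_general (n : ℕ) (X : Set (EuclideanSpace ℝ (Fin n)))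
    (hdiam : 0 < Metric.diam X)
    (c : ℝ) (hc : c ∈ Set.Ioo (0 : ℝ) 1)
    (N : ℕ → ℕ)
    (hN : ∀ k, N k = Set.ncard {m : Fin n → ℤ | (cube n (c ^ k) m ∩ X).Nonempty})
    (F : ℕ → Finset (EuclideanSpace ℝ (Fin n)))
    (hF : ∀ k, ((F k : Set (EuclideanSpace ℝ (Fin n)))) = latticeApprox n X (c ^ k))
    (L : ℝ)
    (hL : Filter.Tendsto (fun k => Real.log (N k : ℝ) / (-Real.log (c ^ k)))
      Filter.atTop (nhds L)) :
    (∃ K : ℕ, ∀ k ≥ K, ∀ a, ¬ IsFocal (F k) a) ∧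
    Filter.Tendsto (fun k => dimfB (F k)) Filter.atTop (nhds L) := by
  obtain ⟨hc₀, hc₁⟩ := hc
  have hε : ∀ k, 0 < c ^ k := fun k => pow_pos hc₀ k
  have hX := nontrivial_of_diam_pos hdiam
  have hn := pos_of_nontrivial hX
  have hne : ∀ k, (F k).Nonempty := fun k => by
    rw [← Finset.coe_nonempty, hF k]
    exact latticeApprox_nonempty (hε k) hX.nonempty
  have hnb k := exists_dist_eq_of_coe_eq_latticeApprox hn (hε k) (hF k)
  have hε₀ := tendsto_pow_atTop_nhds_zero_of_lt_one hc₀.le hc₁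
  have hD : Tendsto (fun k => diam (F k : Set (EuclideanSpace ℝ (Fin n)))) atTop (𝓝 (diam X)) := by
    simpa only [hF] using tendsto_diam_latticeApprox hε hε₀ (isBounded_of_diam_pos hdiam)
      fun k => hF k ▸ (F k).finite_toSet
  have hlt := hε₀.eventually_lt hD hdiam
  refine ⟨?_, ?_⟩
  · obtain ⟨K, hK⟩ := eventually_atTop.mp hlt
    exact ⟨K, fun k hk => not_isFocal_of_forall_exists_dist_eq (hnb k) (hK k hk)⟩
  have hg : Tendsto (fun k : ℕ => -Real.log (c ^ k)) atTop atTop :=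
    tendsto_neg_atBot_atTop.comp
      (Real.tendsto_log_nhdsGT_zero.comp (tendsto_pow_atTop_nhdsWithin_zero_of_lt_one hc₀ hc₁))
  have hTN : ∀ k, |Real.log (Tmin (F k)) - Real.log (N k)| ≤ Real.log (3 ^ n) := fun k => by
    rw [hN k]
    exact abs_log_Tmin_sub_log_ncard_le hn (hε k) (hF k) (hne k)
  refine (tendsto_div_add_of_abs_sub_le hL hTN hg (hD.log hdiam.ne')).congr' ?_
  filter_upwards [hlt] with k hk
  rw [dimfB, nablaF_eq (le_dist_of_coe_eq_latticeApprox (hε k) (hF k)) (hnb k) (hne k),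
    Real.log_div ((hε k).trans hk).ne' (hε k).ne', sub_eq_add_neg]

open FinDim in
/-- Convergence theorem for the finite box dimension: if `X ⊆ ℝⁿ` is compact with
`∇(X) = 0 < Δ(X)` and the box-counting limit `L` exists, then the lattice
approximations `F_k` (eventually without focal points) satisfy
`dim_fB(F_k) → L`. -/
theorem stmt18 (n : ℕ) (X : Set (EuclideanSpace ℝ (Fin n))) (hX : IsCompact X)
    (hnab : nablaSet X = 0) (hdiam : 0 < Metric.diam X)
    (c : ℝ) (hc : c ∈ Set.Ioo (0 : ℝ) 1)
    (N : ℕ → ℕ)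
    (hN : ∀ k, N k = Set.ncard {m : Fin n → ℤ | (cube n (c ^ k) m ∩ X).Nonempty})
    (F : ℕ → Finset (EuclideanSpace ℝ (Fin n)))
    (hF : ∀ k, ((F k : Set (EuclideanSpace ℝ (Fin n)))) = latticeApprox n X (c ^ k))
    (L : ℝ)
    (hL : Filter.Tendsto (fun k => Real.log (N k : ℝ) / (-Real.log (c ^ k)))
      Filter.atTop (nhds L)) :
    (∃ K : ℕ, ∀ k ≥ K, ∀ a, ¬ IsFocal (F k) a) ∧
    Filter.Tendsto (fun k => dimfB (F k)) Filter.atTop (nhds L) :=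
  stmt18_general n X hdiam c hc N hN F hF L hL
end
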